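/- arXiv:1704.08470 — 2 statements merged into one kernel-verified Lean document; each statement's English description precedes it below -/
import Mathlib

section
/- Let d ∈ ℝ^n with d_i ≥ 0 for all i, and let Γ ≥ 0. Then the minimum of (π, ρ) ↦ Γπ + Σ_{i∈[n]} ρ_i over all π ≥ 0 and ρ ∈ ℝ^n with ρ_i ≥ 0 and π + ρ_i ≥ d_i for all i is attained at some π belonging to the finite set {0} ∪ {d_1, …, d_n} (with ρ_i = max(d_i − π, 0)). (Hence the robust problem with budgeted uncertainty is polynomially solvable by enumerating these n+1 candidate values of π.) -/
/-!
For a fixed `π`, the best `ρ` is `ρ_i = max (d_i - π) 0`, so the problem reduces to minimising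
`f π = Γ π + ∑ i, max (d_i - π) 0` over `π ≥ 0`. The function `f` is affine, hence concave,
between consecutive breakpoints `d_i`, so on such an interval its minimum is attained at an
endpoint; to the right of all breakpoints `f π = Γ π` is nondecreasing. Hence every `π ≥ 0` is
beaten by one of the candidates `0, d_1, …, d_n`.
-/

open Finset Set

theorem ConcaveOn.finset_sum {𝕜 E β ι : Type*} [Semiring 𝕜] [PartialOrder 𝕜] [AddCommMonoid E]
    [SMul 𝕜 E] [AddCommMonoid β] [PartialOrder β] [IsOrderedAddMonoid β] [Module 𝕜 β]
    {S : Set E} (hS : Convex 𝕜 S) {s : Finset ι} {f : ι → E → β}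
    (hf : ∀ i ∈ s, ConcaveOn 𝕜 S (f i)) : ConcaveOn 𝕜 S (∑ i ∈ s, f i) :=
  Finset.sum_induction f (ConcaveOn 𝕜 S) (fun _ _ => ConcaveOn.add) (concaveOn_const 0 hS) hf

theorem concaveOn_max_sub_zero_Icc {x a b : ℝ} (hx : x ∉ Ioo a b) :
    ConcaveOn ℝ (Icc a b) (fun t => max (x - t) 0) := by
  rcases le_or_gt x a with hxa | hax
  · refine (concaveOn_const 0 (convex_Icc a b)).congr fun t ht => ?_
    exact (max_eq_right (by linarith [ht.1])).symm
  · have hbx : b ≤ x := not_lt.mp fun hxb => hx ⟨hax, hxb⟩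
    refine ((concaveOn_const x (convex_Icc a b)).sub (convexOn_id (convex_Icc a b))).congr
      fun t ht => ?_
    simp only [Pi.sub_apply, id, max_eq_left (sub_nonneg.mpr (ht.2.trans hbx))]

section BudgetDual

variable {ι : Type*} [Fintype ι]

noncomputable def budgetDual (Γ : ℝ) (d : ι → ℝ) (π : ℝ) : ℝ :=
  Γ * π + ∑ i, max (d i - π) 0

variable {Γ : ℝ} {d : ι → ℝ}

theorem budgetDual_concaveOn_Icc {a b : ℝ} (hd : ∀ i, d i ∉ Ioo a b) :
    ConcaveOn ℝ (Icc a b) (budgetDual Γ d) := by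
  have hlin : ConcaveOn ℝ (Icc a b) (fun t => Γ * t) :=
    (LinearMap.mulLeft ℝ Γ).concaveOn (convex_Icc a b)
  refine (hlin.add (ConcaveOn.finset_sum (convex_Icc a b) (s := univ)
    fun i _ => concaveOn_max_sub_zero_Icc (hd i))).congr fun t _ => ?_
  simp [budgetDual, Finset.sum_apply]

theorem budgetDual_eq_of_forall_le {π : ℝ} (hd : ∀ i, d i ≤ π) : budgetDual Γ d π = Γ * π := by
  simp [budgetDual, hd]

theorem budgetDual_le_of_feasible {π : ℝ} {ρ : ι → ℝ} (hρ : ∀ i, 0 ≤ ρ i)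
    (hfeas : ∀ i, d i ≤ π + ρ i) : budgetDual Γ d π ≤ Γ * π + ∑ i, ρ i :=
  add_le_add_right (sum_le_sum fun i _ => max_le (by linarith [hfeas i]) (hρ i)) _

theorem exists_mem_budgetDual_le (hΓ : 0 ≤ Γ) {C : Finset ℝ} (hdC : ∀ i, d i ∈ C) {a π : ℝ}
    (ha : a ∈ C) (haπ : a ≤ π) : ∃ c ∈ C, budgetDual Γ d c ≤ budgetDual Γ d π := by
  obtain ⟨lo, hlo, hlo_max⟩ :=
    (C.filter (· ≤ π)).exists_max_image id ⟨a, Finset.mem_filter.mpr ⟨ha, haπ⟩⟩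
  obtain ⟨hloC, hloπ⟩ := Finset.mem_filter.mp hlo
  by_cases hup : ∃ c ∈ C, π ≤ c
  · obtain ⟨c, hcC, hπc⟩ := hup
    obtain ⟨hi, hhi, hhi_min⟩ :=
      (C.filter (π ≤ ·)).exists_min_image id ⟨c, Finset.mem_filter.mpr ⟨hcC, hπc⟩⟩
    obtain ⟨hhiC, hπhi⟩ := Finset.mem_filter.mp hhi
    have hgap : ∀ i, d i ∉ Ioo lo hi := by
      rintro i ⟨hlo_lt, hlt_hi⟩
      rcases le_total (d i) π with h | h
      · exact (hlo_max _ (Finset.mem_filter.mpr ⟨hdC i, h⟩)).not_gt hlo_lt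
      · exact (hhi_min _ (Finset.mem_filter.mpr ⟨hdC i, h⟩)).not_gt hlt_hi
    have hmin := (budgetDual_concaveOn_Icc (Γ := Γ) hgap).ge_on_segment
      (left_mem_Icc.mpr (hloπ.trans hπhi)) (right_mem_Icc.mpr (hloπ.trans hπhi))
      (z := π) (by rw [segment_eq_Icc (hloπ.trans hπhi)]; exact ⟨hloπ, hπhi⟩)
    rcases min_le_iff.mp hmin with h | h
    exacts [⟨lo, hloC, h⟩, ⟨hi, hhiC, h⟩]
  · simp only [not_exists, not_and, not_le] at hup
    have hd_lo : ∀ i, d i ≤ lo := fun i =>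
      hlo_max _ (Finset.mem_filter.mpr ⟨hdC i, (hup _ (hdC i)).le⟩)
    refine ⟨lo, hloC, ?_⟩
    rw [budgetDual_eq_of_forall_le hd_lo,
      budgetDual_eq_of_forall_le fun i => (hd_lo i).trans hloπ]
    exact mul_le_mul_of_nonneg_left hloπ hΓ

theorem isLeast_budgetDual {π : ℝ} (hπ : 0 ≤ π)
    (hmin : ∀ t, 0 ≤ t → budgetDual Γ d π ≤ budgetDual Γ d t) :
    IsLeast ((fun p : ℝ × (ι → ℝ) => Γ * p.1 + ∑ i, p.2 i) ''
      {p : ℝ × (ι → ℝ) | 0 ≤ p.1 ∧ (∀ i, 0 ≤ p.2 i) ∧ ∀ i, d i ≤ p.1 + p.2 i})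
      (budgetDual Γ d π) := by
  refine ⟨⟨(π, fun i => max (d i - π) 0), ⟨hπ, fun i => le_max_right _ _, fun i => ?_⟩, rfl⟩, ?_⟩
  · linarith [le_max_left (d i - π) 0]
  · rintro _ ⟨⟨t, ρ⟩, ⟨ht, hρ, hfeas⟩, rfl⟩
    exact (hmin t ht).trans (budgetDual_le_of_feasible hρ hfeas)

end BudgetDual

/-- The dual LP of the budgeted-uncertainty inner problem attains its minimum
at some `π ∈ {0} ∪ {d_1, …, d_n}` with `ρ_i = max (d_i − π) 0`. -/
theorem stmt5 (n : ℕ) (d : Fin n → ℝ) (hd : ∀ i, 0 ≤ d i) (Γ : ℝ) (hΓ : 0 ≤ Γ) :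
    ∃ π : ℝ, (π = 0 ∨ ∃ i, π = d i) ∧
      IsLeast ((fun p : ℝ × (Fin n → ℝ) => Γ * p.1 + ∑ i, p.2 i) ''
        {p : ℝ × (Fin n → ℝ) | 0 ≤ p.1 ∧ (∀ i, 0 ≤ p.2 i) ∧ ∀ i, d i ≤ p.1 + p.2 i})
        (Γ * π + ∑ i, max (d i - π) 0) := by
  set C : Finset ℝ := insert 0 (univ.image d)
  have hdC : ∀ i, d i ∈ C := fun i => mem_insert_of_mem (mem_image_of_mem d (mem_univ i))
  obtain ⟨π, hπC, hπ_min⟩ := C.exists_min_image (budgetDual Γ d) ⟨0, mem_insert_self 0 _⟩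
  have hcand : π = 0 ∨ ∃ i, π = d i := by simpa [C, eq_comm] using hπC
  have hπ : 0 ≤ π := by
    rcases hcand with rfl | ⟨i, rfl⟩
    exacts [le_rfl, hd i]
  refine ⟨π, hcand, isLeast_budgetDual hπ fun t ht => ?_⟩
  obtain ⟨c, hcC, hct⟩ := exists_mem_budgetDual_le hΓ hdC (mem_insert_self 0 _) ht
  exact (hπ_min c hcC).trans hct
end

section
/- Let c^1, …, c^N ∈ ℝ^n, let ĉ = (1/N) Σ_{i∈[N]} c^i be their mean, and let q ∈ ℝ^N satisfy q_i + q_{N+1−i} = 2/N for all i ∈ [N] (as holds for every column of the matrix Q̃ defining the symmetric permutohull). Then the q-permutohull Π_q(c^1,…,c^N) is symmetric with respect to ĉ: for every c ∈ Π_q(c^1,…,c^N), also 2ĉ − c ∈ Π_q(c^1,…,c^N). -/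
/-- The `q`-permutohull of the points `c^1, …, c^N`:
`Π_q(c^1,…,c^N) = conv{ Σ_i q_{σ(i)} c^i : σ ∈ S_N }`. -/
def permutohull {n N : ℕ} (q : Fin N → ℝ) (cs : Fin N → (Fin n → ℝ)) : Set (Fin n → ℝ) :=
  convexHull ℝ (Set.range fun σ : Equiv.Perm (Fin N) => ∑ i, q (σ i) • cs i)

/-- If `q_i + q_{N+1−i} = 2/N` for all `i` (as for every column of the
matrix `Q̃` defining the symmetric permutohull), then the `q`-permutohull is symmetric
with respect to the mean `ĉ` of the data points: `c ∈ Π_q ⟹ 2ĉ − c ∈ Π_q`. -/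
theorem stmt11 (n N : ℕ) (hN : 0 < N) (cs : Fin N → (Fin n → ℝ)) (q : Fin N → ℝ)
    (hq : ∀ i : Fin N, q i + q i.rev = 2 / N)
    (chat : Fin n → ℝ) (hchat : chat = (N : ℝ)⁻¹ • ∑ i, cs i) :
    ∀ c ∈ permutohull q cs, (2 : ℝ) • chat - c ∈ permutohull q cs := by
  intro c hc
  set f : (Fin n → ℝ) →ᵃ[ℝ] (Fin n → ℝ) := AffineMap.homothety chat (-1 : ℝ) with hf
  have hfe : ∀ x : Fin n → ℝ, f x = (2 : ℝ) • chat - x := by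
    intro x
    simp only [hf, AffineMap.homothety_apply, vsub_eq_sub, vadd_eq_add]
    module
  -- key: f maps each vertex to another vertex
  have key : ∀ σ : Equiv.Perm (Fin N),
      ∑ i, q ((σ.trans Fin.revPerm) i) • cs i = f (∑ i, q (σ i) • cs i) := by
    intro σ
    rw [hfe]
    have h1 : ∀ i, q ((σ.trans Fin.revPerm) i) = 2 / N - q (σ i) := by
      intro i
      have := hq (σ i)
      simp only [Equiv.trans_apply, Fin.revPerm_apply]
      linarith
    simp_rw [h1, sub_smul, Finset.sum_sub_distrib, hchat, ← Finset.smul_sum, smul_smul]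
    congr 2
  have hsub : f '' (Set.range fun σ : Equiv.Perm (Fin N) => ∑ i, q (σ i) • cs i)
      ⊆ Set.range fun σ : Equiv.Perm (Fin N) => ∑ i, q (σ i) • cs i := by
    rintro _ ⟨_, ⟨σ, rfl⟩, rfl⟩
    exact ⟨σ.trans Fin.revPerm, key σ⟩
  have : f c ∈ permutohull q cs := by
    apply convexHull_mono hsub
    rw [← AffineMap.image_convexHull]
    exact ⟨c, hc, rfl⟩
  rwa [hfe] at this
end
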